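/- arXiv:math/0702177 — 2 statements merged into one kernel-verified Lean document; each statement's English description precedes it below -/
import Mathlib

section
/- Let (W,S) be a Coxeter system with distinguished generator s_0. If w < w' in the strong Bruhat order on W, then ν(w) ≤ ν(w'). In particular, for w, w' ∈ W^+, w < w' in Bruhat order implies ℓ_{R∪R^{-1}}(w) ≤ ℓ_{R∪R^{-1}}(w'). -/
open CoxeterSystem

namespace AltCox

variable {W : Type*} [Group W]

/-- Word length of `w` with respect to a generating set `A`:
the minimum length of a word in `A` whose product is `w`. -/
noncomputable def glen (A : Set W) (w : W) : ℕ :=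
  sInf {k | ∃ l : List W, (∀ x ∈ l, x ∈ A) ∧ l.prod = w ∧ l.length = k}

variable {n : ℕ} {M : CoxeterMatrix (Fin (n + 1))} (cs : CoxeterSystem M W)

/-- The alternating subgroup `W⁺`: the kernel of the sign character, i.e. the
set of elements of even Coxeter length. -/
def alt : Subgroup W where
  carrier := {w | Even (cs.length w)}
  one_mem' := by simp [Nat.even_iff]
  mul_mem' := by
    intro a b ha hb
    simp only [Set.mem_setOf_eq, Nat.even_iff] at *
    have := cs.length_mul_mod_two a b
    omega
  inv_mem' := by
    intro a ha
    simpa [cs.length_inv] using ha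

/-- The generating set `R = {r_i = s₀ sᵢ : i ≠ 0}` of `W⁺`. -/
def Rset : Set W := {x | ∃ i : Fin (n + 1), i ≠ 0 ∧ x = cs.simple 0 * cs.simple i}

/-- The symmetrized generating set `R ∪ R⁻¹`. -/
def Rsym : Set W := Rset cs ∪ (Rset cs)⁻¹

/-- `ν w`: the minimum number of letters different from `s₀` among all words
in the simple reflections whose product is `w`. -/
noncomputable def nu (w : W) : ℕ :=
  sInf {k | ∃ ω : List (Fin (n + 1)), cs.wordProd ω = w ∧
    (ω.filter (fun i => i ≠ 0)).length = k}

/-- `τ w` is the unique element of `{w, w s₀}` lying in `W⁺`. -/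
noncomputable def tau (w : W) : W :=
  if Even (cs.length w) then w else w * cs.simple 0

/-- `s₀` is evenly laced: `m₀ᵢ` is even or infinite (encoded by `0`) for all `i ≠ 0`. -/
def EvenlyLaced (M : CoxeterMatrix (Fin (n + 1))) : Prop :=
  ∀ i : Fin (n + 1), i ≠ 0 → Even (M 0 i)

/-- The set of all reflections of `(W, S)`. -/
def Tall : Set W := {t | cs.IsReflection t}

/-- The set `T̂` of reflections conjugate to some simple reflection other than `s₀`. -/
def That : Set W := {t | ∃ w : W, ∃ i : Fin (n + 1), i ≠ 0 ∧ t = w * cs.simple i * w⁻¹}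

/-- The set of odd palindromes of `W⁺` with respect to `R`. -/
def Palin : Set W :=
  {p | ∃ l : List W, (∀ x ∈ l, x ∈ Rsym cs) ∧ Odd l.length ∧ l.reverse = l ∧ l.prod = p}

/-- The set of left-shortening palindromes of `w`. -/
noncomputable def PL (w : W) : Set W :=
  {p ∈ Palin cs | glen (Rsym cs) (p * w) < glen (Rsym cs) w}

/-- The set of right-shortening palindromes of `w`. -/
noncomputable def PR (w : W) : Set W :=
  {p ∈ Palin cs | glen (Rsym cs) (w * p) < glen (Rsym cs) w}

/-- The right weak order on `(W⁺, R)`. -/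
noncomputable def rweak (u w : W) : Prop :=
  Relation.ReflTransGen
    (fun a b => ∃ r ∈ Rsym cs, b = a * r ∧
      glen (Rsym cs) b = glen (Rsym cs) a + 1) u w

/-- The left weak order on `(W⁺, R)`. -/
noncomputable def lweak (u w : W) : Prop :=
  Relation.ReflTransGen
    (fun a b => ∃ r ∈ Rsym cs, b = r * a ∧
      glen (Rsym cs) b = glen (Rsym cs) a + 1) u w

/-- The right strong order on `(W⁺, R)`. -/
noncomputable def rstrong (u w : W) : Prop :=
  Relation.ReflTransGen
    (fun a b => ∃ p ∈ Palin cs, b = a * p ∧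
      glen (Rsym cs) a < glen (Rsym cs) b) u w

/-- The left strong order on `(W⁺, R)`. -/
noncomputable def lstrong (u w : W) : Prop :=
  Relation.ReflTransGen
    (fun a b => ∃ p ∈ Palin cs, b = p * a ∧
      glen (Rsym cs) a < glen (Rsym cs) b) u w

/-- The strong Bruhat order on a Coxeter system. -/
noncomputable def bruhatLE {B : Type*} {M' : CoxeterMatrix B} {W' : Type*} [Group W']
    (cs' : CoxeterSystem M' W') (u w : W') : Prop :=
  Relation.ReflTransGen
    (fun a b => ∃ t, cs'.IsReflection t ∧ b = a * t ∧ cs'.length a < cs'.length b) u w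

/-- The right weak order of a Coxeter system. -/
noncomputable def coxRweak {B : Type*} {M' : CoxeterMatrix B} {W' : Type*} [Group W']
    (cs' : CoxeterSystem M' W') (u w : W') : Prop :=
  Relation.ReflTransGen
    (fun a b => ∃ i, b = a * cs'.simple i ∧ cs'.length b = cs'.length a + 1) u w

/-- The standard parabolic subgroup `W_J` for `J ⊆ S`. -/
def parabolic (J : Set (Fin (n + 1))) : Subgroup W :=
  Subgroup.closure (cs.simple '' J)

/-- The image `τ(J) = {s₀ sᵢ : sᵢ ∈ J, i ≠ 0}` of a subset `J ⊆ S` containing `s₀`. -/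
def tauSet (J : Set (Fin (n + 1))) : Set W :=
  {x | ∃ i ∈ J, i ≠ 0 ∧ x = cs.simple 0 * cs.simple i}

/-- The set `W^J` of minimum-length coset representatives for `W/W_J`. -/
def minReps (J : Set (Fin (n + 1))) : Set W :=
  {w | ∀ i ∈ J, cs.length w < cs.length (w * cs.simple i)}

end AltCox

/-!
`ν` grows along Bruhat covers `w < wt` by the strong exchange property: a word for `wt` realising
`ν(wt)` becomes a word for `w` after deleting one letter, and deleting a letter does not increase
the number of letters different from `s₀`.

Strong exchange comes from Tits' permutation representation of `W` on `W × ZMod 2`, in which `sᵢ`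
acts by `(t, ε) ↦ (sᵢ t sᵢ, ε + [t = sᵢ])`. Its second coordinate computes, for `w = π ω`, the
parity of the number of occurrences of `t` in the right inversion sequence of `ω`; since this does
not depend on `ω`, taking `ω` reduced shows that for a reflection `t` it is `1` exactly when
`ℓ(wt) < ℓ(w)`, and then `t` occurs in the right inversion sequence of every word for `w`.

On `W⁺`, `ℓ_{R ∪ R⁻¹} = ν`: moving the letters `s₀` of a word of even length to the front turns
every other letter `sᵢ` into `s₀ sᵢ` or `sᵢ s₀`, and conversely every element of `R ∪ R⁻¹` is a
word with exactly one letter different from `s₀`.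
-/

theorem mul_mul_inv_eq_iff {G : Type*} [Group G] (g x y : G) :
    g * x * g⁻¹ = y ↔ x = g⁻¹ * y * g := by
  constructor <;> rintro rfl <;> group

namespace CoxeterSystem

variable {B W : Type*} [Group W] {M : CoxeterMatrix B} (cs : CoxeterSystem M W)

local prefix:100 "s " => cs.simple
local prefix:100 "π " => cs.wordProd
local prefix:100 "ℓ " => cs.length
local prefix:100 "ris " => cs.rightInvSeq

theorem simple_mul_mul_simple_eq_iff (i : B) (x y : W) :
    s i * x * s i = y ↔ x = s i * y * s i := by
  simpa using mul_mul_inv_eq_iff (s i) x y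

open Classical in
noncomputable def reflectionPerm (i : B) : Equiv.Perm (W × ZMod 2) :=
  Function.Involutive.toPerm (fun x => (s i * x.1 * s i, x.2 + if x.1 = s i then 1 else 0))
    (by
      rintro ⟨t, ε⟩
      have hfix : s i * t * s i = s i ↔ t = s i := by
        rw [simple_mul_mul_simple_eq_iff, simple_mul_simple_self, one_mul]
      have hback : s i * (s i * t * s i) * s i = t := by simp [mul_assoc]
      simp only [hfix, hback, Prod.mk.injEq, true_and]
      split_ifs <;> simp [add_assoc, CharTwo.add_self_eq_zero])

open Classical in
theorem reflectionPerm_apply (i : B) (t : W) (ε : ZMod 2) :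
    cs.reflectionPerm i (t, ε) = (s i * t * s i, ε + if t = s i then 1 else 0) := rfl

open Classical in
theorem reflectionPerm_mul_pow_apply (i i' : B) (k : ℕ) (t : W) (ε : ZMod 2) :
    ((cs.reflectionPerm i * cs.reflectionPerm i') ^ k) (t, ε) =
      ((s i' * s i)⁻¹ ^ k * t * (s i' * s i) ^ k,
        ε + ∑ j ∈ Finset.range (2 * k), if t = (s i' * s i) ^ j * s i' then 1 else 0) := by
  induction k generalizing t ε with
  | zero => simp
  | succ k ih =>
    set d := s i' * s i with hd
    clear_value d
    have hstep : (cs.reflectionPerm i * cs.reflectionPerm i') (t, ε) =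
        (d⁻¹ * t * d, ε + ((if t = d ^ 0 * s i' then 1 else 0) +
          if t = d ^ 1 * s i' then 1 else 0)) := by
      have hi : s i' * t * s i' = s i ↔ t = d ^ 1 * s i' := by
        rw [simple_mul_mul_simple_eq_iff, pow_one, hd]
      rw [Equiv.Perm.mul_apply, reflectionPerm_apply, reflectionPerm_apply, hi, pow_zero, one_mul,
        add_assoc, hd, mul_inv_rev, inv_simple, inv_simple]
      simp only [mul_assoc]
    have hshift (j : ℕ) : d⁻¹ * t * d = d ^ j * s i' ↔ t = d ^ (j + 1 + 1) * s i' := by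
      have hreflect : s i' * d⁻¹ = d * s i' := by simp [hd, mul_assoc]
      have hconj : d * (d ^ j * s i') * d⁻¹ = d ^ (j + 1 + 1) * s i' := by
        rw [mul_assoc, mul_assoc, hreflect, pow_succ, pow_succ']
        simp only [mul_assoc]
      simpa [← hconj] using mul_mul_inv_eq_iff d⁻¹ t (d ^ j * s i')
    rw [pow_succ, Equiv.Perm.mul_apply, hstep, ih]
    simp only [hshift]
    rw [show 2 * (k + 1) = 2 * k + 1 + 1 by ring, Finset.sum_range_succ', Finset.sum_range_succ']
    simp only [Prod.mk.injEq]
    constructor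
    · group
    · ring

theorem isLiftable_reflectionPerm : M.IsLiftable cs.reflectionPerm := by
  classical
  intro i i'
  ext ⟨t, ε⟩ : 1
  -- The `2m` conditions `t = (sᵢ' sᵢ) ^ j * sᵢ'`, `j < 2m`, repeat with period `m = M i i'`,
  -- so each `t` is counted an even number of times.
  have hperiodic (j : ℕ) : (s i' * s i) ^ (M i i' + j) = (s i' * s i) ^ j := by
    simp [pow_add]
  rw [reflectionPerm_mul_pow_apply, inv_pow, simple_mul_simple_pow', inv_one, one_mul, mul_one,
    two_mul, Finset.sum_range_add]
  simp only [hperiodic, CharTwo.add_self_eq_zero, add_zero, Equiv.Perm.one_apply]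

noncomputable def reflectionRep : W →* Equiv.Perm (W × ZMod 2) :=
  cs.lift ⟨cs.reflectionPerm, cs.isLiftable_reflectionPerm⟩

theorem reflectionRep_simple (i : B) : cs.reflectionRep (s i) = cs.reflectionPerm i :=
  cs.lift_apply_simple cs.isLiftable_reflectionPerm i

open Classical in
theorem reflectionRep_wordProd_apply (ω : List B) (t : W) (ε : ZMod 2) :
    cs.reflectionRep (π ω) (t, ε) = (π ω * t * (π ω)⁻¹, ε + (ris ω).count t) := by
  induction ω generalizing t ε with
  | nil => simp
  | cons i ω ih =>
    rw [wordProd_cons, map_mul, Equiv.Perm.mul_apply, ih, reflectionRep_simple,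
      reflectionPerm_apply, mul_mul_inv_eq_iff, rightInvSeq, List.count_cons]
    simp only [mul_inv_rev, inv_simple, mul_assoc, beq_iff_eq, eq_comm (b := t), Nat.cast_add,
      Nat.cast_ite, Nat.cast_one, Nat.cast_zero, add_assoc]

noncomputable def inversionParity (w t : W) : ZMod 2 := (cs.reflectionRep w (t, 0)).2

open Classical in
theorem inversionParity_wordProd (ω : List B) (t : W) :
    cs.inversionParity (π ω) t = (ris ω).count t := by
  simp [inversionParity, reflectionRep_wordProd_apply]

theorem reflectionRep_apply (w t : W) (ε : ZMod 2) :
    cs.reflectionRep w (t, ε) = (w * t * w⁻¹, ε + cs.inversionParity w t) := by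
  obtain ⟨ω, rfl⟩ := cs.wordProd_surjective w
  rw [reflectionRep_wordProd_apply, inversionParity_wordProd]

theorem inversionParity_mul (u v t : W) :
    cs.inversionParity (u * v) t = cs.inversionParity v t + cs.inversionParity u (v * t * v⁻¹) := by
  rw [inversionParity, map_mul, Equiv.Perm.mul_apply, reflectionRep_apply, reflectionRep_apply,
    zero_add]

theorem inversionParity_one (t : W) : cs.inversionParity 1 t = 0 := by
  simp [inversionParity]

theorem inversionParity_simple_self (i : B) : cs.inversionParity (s i) (s i) = 1 := by
  simpa using cs.inversionParity_wordProd [i] (s i)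

theorem mem_rightInvSeq_of_inversionParity_eq_one {ω : List B} {t : W}
    (h : cs.inversionParity (π ω) t = 1) : t ∈ ris ω := by
  classical
  rw [inversionParity_wordProd] at h
  refine List.count_pos_iff.mp (Nat.pos_of_ne_zero fun h0 => ?_)
  rw [h0, Nat.cast_zero] at h
  exact zero_ne_one h

theorem length_mul_lt_of_inversionParity_eq_one {w t : W} (h : cs.inversionParity w t = 1) :
    ℓ (w * t) < ℓ w := by
  obtain ⟨ω, hω, rfl⟩ := cs.exists_isReduced w
  exact (cs.isRightInversion_of_mem_rightInvSeq hω
    (cs.mem_rightInvSeq_of_inversionParity_eq_one h)).2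

namespace IsReflection

variable {cs}

theorem inversionParity_self {t : W} (ht : cs.IsReflection t) :
    cs.inversionParity t t = 1 := by
  obtain ⟨u, i, rfl⟩ := ht
  have hconj : u⁻¹ * (u * s i * u⁻¹) * u⁻¹⁻¹ = s i := by group
  have hcancel := cs.inversionParity_mul u u⁻¹ (u * s i * u⁻¹)
  rw [mul_inv_cancel, inversionParity_one, hconj] at hcancel
  rw [inversionParity_mul, hconj, inversionParity_mul, inversionParity_simple_self,
    mul_inv_cancel_right]
  linear_combination -hcancel

theorem inversionParity_eq_one_of_length_mul_lt {w t : W}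
    (ht : cs.IsReflection t) (hlt : ℓ (w * t) < ℓ w) : cs.inversionParity w t = 1 := by
  by_contra hne
  have hzero : cs.inversionParity w t = 0 := (by decide : ∀ a : ZMod 2, a ≠ 1 → a = 0) _ hne
  have hflip : cs.inversionParity (w * t) t = 1 := by
    rw [inversionParity_mul, ht.inversionParity_self, mul_inv_cancel_right, hzero, add_zero]
  have hlt' := cs.length_mul_lt_of_inversionParity_eq_one hflip
  rw [mul_assoc, ht.mul_self, mul_one] at hlt'
  omega

/-- The strong exchange property. -/
theorem exists_wordProd_eraseIdx_eq_mul {ω : List B} {t : W}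
    (ht : cs.IsReflection t) (hlt : ℓ (π ω * t) < ℓ (π ω)) :
    ∃ j < ω.length, π (ω.eraseIdx j) = π ω * t := by
  have hmem := cs.mem_rightInvSeq_of_inversionParity_eq_one
    (ht.inversionParity_eq_one_of_length_mul_lt hlt)
  obtain ⟨j, hj, rfl⟩ := List.getElem_of_mem hmem
  refine ⟨j, by simpa using hj, ?_⟩
  rw [← wordProd_mul_getD_rightInvSeq, List.getD_eq_getElem _ _ hj]

end IsReflection

theorem simple_pow_of_even (i : B) {k : ℕ} (hk : Even k) : s i ^ k = 1 := by
  obtain ⟨m, rfl⟩ := hk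
  rw [← two_mul, pow_mul, simple_sq, one_pow]

theorem even_length_wordProd_iff (ω : List B) : Even (ℓ (π ω)) ↔ Even ω.length := by
  have hparity : cs.lengthParity (π ω) = Multiplicative.ofAdd (ω.length : ZMod 2) := by
    simp [wordProd, map_list_prod, lengthParity_comp_simple, List.prod_replicate, ← ofAdd_nsmul]
  rw [lengthParity_eq_ofAdd_length] at hparity
  rw [← ZMod.natCast_eq_zero_iff_even, ← ZMod.natCast_eq_zero_iff_even]
  exact iff_of_eq (congrArg (· = 0) (Multiplicative.ofAdd.injective hparity))

end CoxeterSystem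

namespace AltCox

variable {W : Type*} [Group W] {n : ℕ} {M : CoxeterMatrix (Fin (n + 1))} (cs : CoxeterSystem M W)

theorem glen_le_length {A : Set W} {l : List W} (hl : ∀ x ∈ l, x ∈ A) :
    glen A l.prod ≤ l.length := by
  exact Nat.sInf_le ⟨l, hl, rfl, rfl⟩

theorem exists_list_length_eq_glen {A : Set W} {l : List W} (hl : ∀ x ∈ l, x ∈ A) :
    ∃ l' : List W, (∀ x ∈ l', x ∈ A) ∧ l'.prod = l.prod ∧ l'.length = glen A l.prod := by
  have hne : {k | ∃ l' : List W, (∀ x ∈ l', x ∈ A) ∧ l'.prod = l.prod ∧ l'.length = k}.Nonempty :=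
    ⟨_, l, hl, rfl, rfl⟩
  exact Nat.sInf_mem hne

theorem nu_le_of_wordProd_eq {w : W} {ω : List (Fin (n + 1))} (h : cs.wordProd ω = w) :
    nu cs w ≤ (ω.filter (fun i => i ≠ 0)).length :=
  Nat.sInf_le ⟨ω, h, rfl⟩

theorem exists_wordProd_eq_length_eq_nu (w : W) :
    ∃ ω : List (Fin (n + 1)), cs.wordProd ω = w ∧ (ω.filter (fun i => i ≠ 0)).length = nu cs w := by
  obtain ⟨ω, rfl⟩ := cs.wordProd_surjective w
  have hne : {k | ∃ ω' : List (Fin (n + 1)), cs.wordProd ω' = cs.wordProd ω ∧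
      (ω'.filter (fun i => i ≠ 0)).length = k}.Nonempty := ⟨_, ω, rfl, rfl⟩
  exact Nat.sInf_mem hne

theorem nu_le_nu_mul_of_length_lt {w t : W} (ht : cs.IsReflection t)
    (hlt : cs.length w < cs.length (w * t)) : nu cs w ≤ nu cs (w * t) := by
  obtain ⟨ω, hω, hcount⟩ := exists_wordProd_eq_length_eq_nu cs (w * t)
  have hback : w * t * t = w := by rw [mul_assoc, ht.mul_self, mul_one]
  obtain ⟨j, -, hj⟩ := ht.exists_wordProd_eraseIdx_eq_mul (ω := ω) (by rwa [hω, hback])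
  rw [hω, hback] at hj
  calc nu cs w ≤ ((ω.eraseIdx j).filter (fun i => i ≠ 0)).length := nu_le_of_wordProd_eq cs hj
    _ ≤ (ω.filter (fun i => i ≠ 0)).length := ((ω.eraseIdx_sublist j).filter _).length_le
    _ = nu cs (w * t) := hcount

theorem nu_le_nu_of_bruhatLE {u w : W} (h : bruhatLE cs u w) : nu cs u ≤ nu cs w := by
  induction h with
  | refl => exact le_rfl
  | tail _ hstep ih =>
    obtain ⟨t, ht, rfl, hlt⟩ := hstep
    exact ih.trans (nu_le_nu_mul_of_length_lt cs ht hlt)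

theorem exists_word_of_mem_Rsym {r : W} (hr : r ∈ Rsym cs) :
    ∃ ω : List (Fin (n + 1)), cs.wordProd ω = r ∧ (ω.filter (fun i => i ≠ 0)).length = 1 := by
  rcases hr with ⟨i, hi, rfl⟩ | ⟨i, hi, hr⟩
  · exact ⟨[0, i], by simp [wordProd_cons], by simp [hi]⟩
  · refine ⟨[i, 0], ?_, by simp [hi]⟩
    rw [← inv_inv r, hr]
    simp [wordProd_cons]

theorem exists_word_of_forall_mem_Rsym {l : List W} (hl : ∀ x ∈ l, x ∈ Rsym cs) :
    ∃ ω : List (Fin (n + 1)), cs.wordProd ω = l.prod ∧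
      (ω.filter (fun i => i ≠ 0)).length = l.length := by
  induction l with
  | nil => exact ⟨[], by simp, rfl⟩
  | cons r l ih =>
    obtain ⟨ωr, hωr, hcount_r⟩ := exists_word_of_mem_Rsym cs (hl r List.mem_cons_self)
    obtain ⟨ωl, hωl, hcount_l⟩ := ih fun x hx => hl x (List.mem_cons_of_mem r hx)
    refine ⟨ωr ++ ωl, by rw [wordProd_append, hωr, hωl, List.prod_cons], ?_⟩
    rw [List.filter_append, List.length_append, hcount_r, hcount_l, List.length_cons, add_comm]

theorem simple_zero_pow_mul_simple_mul_pow_mem_Rsym {i : Fin (n + 1)} (hi : i ≠ 0) (k : ℕ) :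
    cs.simple 0 ^ (k + 1) * cs.simple i * cs.simple 0 ^ k ∈ Rsym cs := by
  rcases Nat.even_or_odd' k with ⟨m, rfl | rfl⟩
  exacts [Or.inl ⟨i, hi, by simp [pow_succ, pow_mul]⟩, Or.inr ⟨i, hi, by simp [pow_succ, pow_mul]⟩]

theorem exists_list_Rsym_prod_eq (ω : List (Fin (n + 1))) :
    ∃ l : List W, (∀ x ∈ l, x ∈ Rsym cs) ∧
      l.prod = cs.simple 0 ^ ω.length * cs.wordProd ω ∧
      l.length = (ω.filter (fun i => i ≠ 0)).length := by
  induction ω with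
  | nil => exact ⟨[], by simp, by simp, rfl⟩
  | cons i ω ih =>
    obtain ⟨l, hl, hprod, hlen⟩ := ih
    by_cases hi : i = 0
    · subst hi
      refine ⟨l, hl, ?_, by simp [hlen]⟩
      rw [hprod, wordProd_cons, List.length_cons, pow_succ, mul_assoc,
        simple_mul_simple_cancel_left]
    · refine ⟨(cs.simple 0 ^ (ω.length + 1) * cs.simple i * cs.simple 0 ^ ω.length) :: l,
        ?_, ?_, by simp [hi, hlen]⟩
      · simpa using ⟨simple_zero_pow_mul_simple_mul_pow_mem_Rsym cs hi ω.length, hl⟩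
      · have hcancel : cs.simple 0 ^ ω.length * (cs.simple 0 ^ ω.length * cs.wordProd ω) =
            cs.wordProd ω := by
          rw [← mul_assoc, ← pow_add, cs.simple_pow_of_even 0 ⟨_, rfl⟩, one_mul]
        rw [List.prod_cons, hprod, wordProd_cons, List.length_cons]
        simp only [mul_assoc, hcancel]

theorem glen_eq_nu {w : W} (hw : Even (cs.length w)) : glen (Rsym cs) w = nu cs w := by
  obtain ⟨ω, rfl, hcount⟩ := exists_wordProd_eq_length_eq_nu cs w
  obtain ⟨l, hl, hprod, hlen⟩ := exists_list_Rsym_prod_eq cs ω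
  rw [cs.simple_pow_of_even 0 ((cs.even_length_wordProd_iff ω).mp hw), one_mul] at hprod
  apply le_antisymm
  · calc glen (Rsym cs) (cs.wordProd ω) ≤ l.length := hprod ▸ glen_le_length hl
      _ = nu cs (cs.wordProd ω) := hlen.trans hcount
  · obtain ⟨l', hl', hprod', hlen'⟩ := exists_list_length_eq_glen hl
    obtain ⟨ω', hω', hcount'⟩ := exists_word_of_forall_mem_Rsym cs hl'
    calc nu cs (cs.wordProd ω) ≤ (ω'.filter (fun i => i ≠ 0)).length :=
          nu_le_of_wordProd_eq cs (hω'.trans (hprod'.trans hprod))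
      _ = glen (Rsym cs) (cs.wordProd ω) := by rw [hcount', hlen', hprod]

/-- If `w < w'` in the strong Bruhat order on `W` then `ν(w) ≤ ν(w')`; in
particular, for `w, w' ∈ W⁺`, `ℓ_{R ∪ R⁻¹}(w) ≤ ℓ_{R ∪ R⁻¹}(w')`. -/
theorem statement6 :
    (∀ u w : W, bruhatLE cs u w → u ≠ w → nu cs u ≤ nu cs w) ∧
    (∀ u w : W, u ∈ alt cs → w ∈ alt cs → bruhatLE cs u w → u ≠ w →
      glen (Rsym cs) u ≤ glen (Rsym cs) w) := by
  refine ⟨fun u w h _ => nu_le_nu_of_bruhatLE cs h, fun u w hu hw h _ => ?_⟩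
  rw [glen_eq_nu cs hu, glen_eq_nu cs hw]
  exact nu_le_nu_of_bruhatLE cs h

end AltCox
end

section
/- Let (W,S) be a Coxeter system in which s_0 is evenly-laced. For J ⊆ S with s_0 ∈ J, every w ∈ W^+ factors uniquely as w = τ(x)·y with x ∈ W^J and y ∈ W^+_{τ(J)}, and this factorization is length-additive: ℓ_{R∪R^{-1}}(w) = ℓ_{R∪R^{-1}}(τ(x)) + ℓ_{R∪R^{-1}}(y). -/
open CoxeterSystem

namespace AltCox

variable {W : Type*} [Group W]

variable {n : ℕ} {M : CoxeterMatrix (Fin (n + 1))} (cs : CoxeterSystem M W)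

/-!
Since `s₀` is evenly laced, `W` has a character to `ℤ/2` that is nontrivial on `s₀` and trivial
on the other simple reflections, so no reflection is conjugate both to `s₀` and to some `sᵢ` with
`i ≠ 0`. The letters `i ≠ 0` of a word thus correspond to the entries of its right inversion
sequence that are conjugate to such an `sᵢ`. For a reduced word these entries are distinct, and
each occurs an odd number of times in the right inversion sequence of every word for the same
element (the parity of these multiplicities is read off from the reflection representation on
`W × ℤ/2`). Hence reduced words minimise the number of letters `i ≠ 0`: `ν` is computed by any
reduced word and is additive on length-additive products. On `W⁺`, `ν` is the length with respect
to `R ∪ R⁻¹`, by pairing letters as `s_b s_c = (s_b s₀)(s₀ s_c)`.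

Given `w`, let `x` be of minimal length in `w W_J`. Then `w = x · (x⁻¹ w)` is length-additive,
`τ(x)⁻¹ w` is an even element of `W_J`, hence lies in `W⁺_{τ(J)}`, and `ν` is unchanged by
multiplication with `s₀`. Uniqueness holds because an element of `x W_J` without right descents
in `J` is `x` itself.
-/

noncomputable section ReflectionRepresentation

open scoped Classical

variable {B : Type*} {M : CoxeterMatrix B} (cs : CoxeterSystem M W)

lemma conj_eq_iff_eq_inv_conj {G : Type*} [Group G] (g w t : G) :
    g * w * g⁻¹ = t ↔ w = g⁻¹ * t * g := by
  constructor <;> rintro rfl <;> group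

lemma simple_mul_mul_simple_eq_simple_iff (i : B) (w : W) :
    cs.simple i * w * cs.simple i = cs.simple i ↔ w = cs.simple i := by
  constructor
  · intro h
    simpa [mul_assoc] using congrArg (cs.simple i * · * cs.simple i) h
  · rintro rfl
    simp

def reflPerm (i : B) : Equiv.Perm (W × ZMod 2) :=
  Function.Involutive.toPerm
    (fun p => (cs.simple i * p.1 * cs.simple i, p.2 + if p.1 = cs.simple i then 1 else 0))
    (by
      rintro ⟨w, a⟩
      by_cases h : w = cs.simple i
      · subst h
        simp [add_assoc, CharTwo.add_self_eq_zero]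
      · simp only [simple_mul_mul_simple_eq_simple_iff, if_neg h]
        simp [mul_assoc])

lemma reflPerm_apply (i : B) (w : W) (a : ZMod 2) :
    reflPerm cs i (w, a) =
      (cs.simple i * w * cs.simple i, a + if w = cs.simple i then 1 else 0) := rfl

def dihedralReflection (i j : B) (l : ℕ) : W := cs.simple j * (cs.simple i * cs.simple j) ^ l

lemma dihedralReflection_conj (i j : B) (l : ℕ) :
    (cs.simple i * cs.simple j)⁻¹ * dihedralReflection cs i j l * (cs.simple i * cs.simple j) =
      dihedralReflection cs i j (l + 2) := by
  have h : (cs.simple i * cs.simple j)⁻¹ * cs.simple j =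
      cs.simple j * (cs.simple i * cs.simple j) := by
    simp [mul_assoc]
  rw [dihedralReflection, dihedralReflection, ← mul_assoc _ (cs.simple j), h, pow_succ, pow_succ']
  simp only [mul_assoc]

lemma reflPerm_mul_reflPerm_pow_apply (i j : B) (k : ℕ) (w : W) (a : ZMod 2) :
    ((reflPerm cs i * reflPerm cs j) ^ k) (w, a) =
      ((cs.simple i * cs.simple j) ^ k * w * ((cs.simple i * cs.simple j) ^ k)⁻¹,
        a + ∑ l ∈ Finset.range (2 * k), if w = dihedralReflection cs i j l then 1 else 0) := by
  induction k generalizing w a with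
  | zero => simp
  | succ k ih =>
    have hconj (l : ℕ) : cs.simple i * cs.simple j * w * (cs.simple i * cs.simple j)⁻¹ =
        dihedralReflection cs i j l ↔ w = dihedralReflection cs i j (l + 2) := by
      rw [conj_eq_iff_eq_inv_conj, dihedralReflection_conj]
    have hstep : (reflPerm cs i * reflPerm cs j) (w, a) =
        (cs.simple i * cs.simple j * w * (cs.simple i * cs.simple j)⁻¹,
          a + (if w = dihedralReflection cs i j 0 then 1 else 0) +
            if w = dihedralReflection cs i j 1 then 1 else 0) := by
      have h1 : cs.simple j * w * cs.simple j = cs.simple i ↔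
          w = dihedralReflection cs i j 1 := by
        rw [dihedralReflection, pow_one]
        constructor
        · rintro h
          rw [← h]
          simp [mul_assoc]
        · rintro rfl
          simp [mul_assoc]
      rw [Equiv.Perm.mul_apply, reflPerm_apply, reflPerm_apply, h1]
      simp [dihedralReflection, mul_assoc]
    rw [pow_succ, Equiv.Perm.mul_apply, hstep, ih]
    simp only [hconj, Prod.mk.injEq]
    refine ⟨by simp [pow_succ, mul_assoc], ?_⟩
    rw [show 2 * (k + 1) = 2 * k + 1 + 1 by ring, Finset.sum_range_succ', Finset.sum_range_succ']
    ring

lemma isLiftable_reflPerm : M.IsLiftable (reflPerm cs) := by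
  intro i j
  ext ⟨w, a⟩ : 1
  -- the `2 m` flips come in equal pairs, as the dihedral reflections repeat with period `m`
  have hperiodic (l : ℕ) :
      dihedralReflection cs i j (M i j + l) = dihedralReflection cs i j l := by
    rw [dihedralReflection, pow_add, simple_mul_simple_pow, one_mul, dihedralReflection]
  rw [reflPerm_mul_reflPerm_pow_apply, two_mul, Finset.sum_range_add]
  simp [hperiodic, simple_mul_simple_pow, CharTwo.add_self_eq_zero]

def reflRep : W →* Equiv.Perm (W × ZMod 2) := cs.lift ⟨reflPerm cs, isLiftable_reflPerm cs⟩

lemma reflRep_wordProd_apply (ω : List B) (w : W) (a : ZMod 2) :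
    reflRep cs (cs.wordProd ω) (w, a) =
      (cs.wordProd ω * w * (cs.wordProd ω)⁻¹, a + (cs.rightInvSeq ω).count w) := by
  induction ω generalizing a with
  | nil => simp
  | cons i ω ih =>
    rw [wordProd_cons, map_mul, Equiv.Perm.mul_apply, ih, reflRep,
      cs.lift_apply_simple (isLiftable_reflPerm cs), reflPerm_apply, conj_eq_iff_eq_inv_conj]
    simp only [rightInvSeq, List.count_cons, Prod.mk.injEq, mul_inv_rev, inv_simple]
    refine ⟨by group, ?_⟩
    by_cases hw : w = (cs.wordProd ω)⁻¹ * cs.simple i * cs.wordProd ω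
    · simp [hw, add_assoc]
    · simp [hw, Ne.symm hw]

theorem count_rightInvSeq_cast_eq {ω ω' : List B} (h : cs.wordProd ω = cs.wordProd ω') (t : W) :
    ((cs.rightInvSeq ω).count t : ZMod 2) = (cs.rightInvSeq ω').count t := by
  have := congrArg (fun g => (reflRep cs g (t, 0)).2) h
  simpa [reflRep_wordProd_apply] using this

end ReflectionRepresentation

section

variable {B : Type*} {M : CoxeterMatrix B} (cs : CoxeterSystem M W) {J : Set B}

lemma even_length_wordProd_iff (ω : List B) :
    Even (cs.length (cs.wordProd ω)) ↔ Even ω.length := by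
  rw [Nat.even_iff, Nat.even_iff]
  induction ω with
  | nil => simp
  | cons i ω ih =>
    rw [wordProd_cons, List.length_cons]
    have := cs.length_simple_mul_ne (cs.wordProd ω) i
    rcases cs.length_simple_mul (cs.wordProd ω) i with h | h <;> omega

lemma rightInvSeq_subset_of_nodup {ω ω' : List B} (h : cs.wordProd ω = cs.wordProd ω')
    (hnd : (cs.rightInvSeq ω).Nodup) : cs.rightInvSeq ω ⊆ cs.rightInvSeq ω' := by
  classical
  intro t ht
  by_contra hnot
  have hcount := count_rightInvSeq_cast_eq cs h t
  rw [List.count_eq_one_of_mem hnd ht, List.count_eq_zero_of_not_mem hnot] at hcount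
  exact absurd hcount (by decide)

lemma isReduced_of_nodup_rightInvSeq {ω : List B} (hnd : (cs.rightInvSeq ω).Nodup) :
    cs.IsReduced ω := by
  obtain ⟨ω', hred, hω'⟩ := cs.exists_isReduced (cs.wordProd ω)
  have hle : ω.length ≤ ω'.length := by
    simpa using (hnd.subperm (rightInvSeq_subset_of_nodup cs hω' hnd)).length_le
  have hlen : cs.length (cs.wordProd ω') = ω'.length := hred
  have := cs.length_wordProd_le ω
  rw [hω'] at this
  rw [CoxeterSystem.IsReduced, hω']
  omega

lemma wordProd_eraseIdx_eraseIdx {ω : List B} {j k : ℕ} (hjk : j < k) (hk : k < ω.length)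
    (hdup : (cs.rightInvSeq ω).getD j 1 = (cs.rightInvSeq ω).getD k 1) :
    cs.wordProd ((ω.eraseIdx j).eraseIdx (k - 1)) = cs.wordProd ω := by
  have hshift : (cs.rightInvSeq (ω.eraseIdx j)).getD (k - 1) 1 = (cs.rightInvSeq ω).getD k 1 := by
    grind only [cs.getD_rightInvSeq, = List.eraseIdx_eq_take_drop_succ, = List.getElem?_eraseIdx,
      = List.drop_append, List.drop_of_length_le, List.drop_drop, = List.length_append,
      = List.length_take, = List.length_drop, = min_def]
  rw [← cs.wordProd_mul_getD_rightInvSeq, hshift, ← cs.wordProd_mul_getD_rightInvSeq, ← hdup,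
    mul_assoc, cs.getD_rightInvSeq_mul_self, mul_one]

/-- The deletion property. -/
theorem exists_sublist_of_not_isReduced {ω : List B} (h : ¬cs.IsReduced ω) :
    ∃ ω', ω'.Sublist ω ∧ ω'.length + 2 = ω.length ∧ cs.wordProd ω' = cs.wordProd ω := by
  have hnd : ¬(cs.rightInvSeq ω).Nodup := fun hnd => h (isReduced_of_nodup_rightInvSeq cs hnd)
  obtain ⟨j, k, hjk, hk, hdup⟩ : ∃ j k, j < k ∧ k < ω.length ∧
      (cs.rightInvSeq ω).getD j 1 = (cs.rightInvSeq ω).getD k 1 := by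
    rw [List.nodup_iff_getElem?_ne_getElem?] at hnd
    push Not at hnd
    obtain ⟨j, k, hjk, hk, hdup⟩ := hnd
    refine ⟨j, k, hjk, by simpa using hk, ?_⟩
    rw [List.getD_eq_getElem?_getD, List.getD_eq_getElem?_getD, hdup]
  refine ⟨(ω.eraseIdx j).eraseIdx (k - 1),
    ((ω.eraseIdx j).eraseIdx_sublist _).trans (ω.eraseIdx_sublist j), ?_,
    wordProd_eraseIdx_eraseIdx cs hjk hk hdup⟩
  simp only [List.length_eraseIdx]
  grind

lemma length_filter_rightInvSeq (P : W → Prop) [DecidablePred P]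
    (hP : ∀ g t, P (g⁻¹ * t * g) ↔ P t) (ω : List B) :
    ((cs.rightInvSeq ω).filter (fun t => P t)).length =
      (ω.filter (fun i => P (cs.simple i))).length := by
  induction ω with
  | nil => rfl
  | cons i ω ih =>
    simp only [rightInvSeq, List.filter_cons, hP]
    split_ifs <;> simp [ih]

theorem length_filter_le_of_isReduced (P : W → Prop) [DecidablePred P]
    (hP : ∀ g t, P (g⁻¹ * t * g) ↔ P t) {ω ω' : List B} (h : cs.wordProd ω = cs.wordProd ω')
    (hred : cs.IsReduced ω) :
    (ω.filter (fun i => P (cs.simple i))).length ≤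
      (ω'.filter (fun i => P (cs.simple i))).length := by
  rw [← length_filter_rightInvSeq cs P hP, ← length_filter_rightInvSeq cs P hP]
  refine ((hred.nodup_rightInvSeq.filter _).subperm ?_).length_le
  intro t ht
  rw [List.mem_filter] at ht ⊢
  exact ⟨rightInvSeq_subset_of_nodup cs h hred.nodup_rightInvSeq ht.1, ht.2⟩

lemma wordProd_mem_closure {ω : List B} (hω : ∀ i ∈ ω, i ∈ J) :
    cs.wordProd ω ∈ Subgroup.closure (cs.simple '' J) := by
  refine Subgroup.list_prod_mem _ fun _ hx => ?_
  obtain ⟨i, hi, rfl⟩ := List.mem_map.mp hx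
  exact Subgroup.subset_closure ⟨i, hω i hi, rfl⟩

lemma exists_word_of_mem_closure {u : W} (hu : u ∈ Subgroup.closure (cs.simple '' J)) :
    ∃ ω : List B, (∀ i ∈ ω, i ∈ J) ∧ cs.wordProd ω = u := by
  induction hu using Subgroup.closure_induction with
  | mem x hx =>
    obtain ⟨i, hi, rfl⟩ := hx
    exact ⟨[i], by simpa using hi, cs.wordProd_singleton i⟩
  | one => exact ⟨[], by simp, cs.wordProd_nil⟩
  | mul x y _ _ ihx ihy =>
    obtain ⟨ω₁, h₁, rfl⟩ := ihx
    obtain ⟨ω₂, h₂, rfl⟩ := ihy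
    exact ⟨ω₁ ++ ω₂, fun i hi => (List.mem_append.mp hi).elim (h₁ i) (h₂ i),
      cs.wordProd_append ω₁ ω₂⟩
  | inv x _ ih =>
    obtain ⟨ω, hω, rfl⟩ := ih
    exact ⟨ω.reverse, fun i hi => hω i (List.mem_reverse.mp hi), cs.wordProd_reverse ω⟩

lemma exists_isReduced_word_of_mem_closure {u : W}
    (hu : u ∈ Subgroup.closure (cs.simple '' J)) :
    ∃ ω : List B, (∀ i ∈ ω, i ∈ J) ∧ cs.IsReduced ω ∧ cs.wordProd ω = u := by
  classical
  have hex : ∃ k, ∃ ω : List B, (∀ i ∈ ω, i ∈ J) ∧ cs.wordProd ω = u ∧ ω.length = k := by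
    obtain ⟨ω, hω, rfl⟩ := exists_word_of_mem_closure cs hu
    exact ⟨_, ω, hω, rfl, rfl⟩
  obtain ⟨ω, hω, rfl, hlen⟩ := Nat.find_spec hex
  refine ⟨ω, hω, by_contra fun hred => ?_, rfl⟩
  obtain ⟨ω', hsub, hlen', hω'⟩ := exists_sublist_of_not_isReduced cs hred
  exact Nat.find_min hex (by omega) ⟨ω', fun i hi => hω i (hsub.subset hi), hω', rfl⟩

lemma exists_isRightDescent_of_mem_closure {u : W}
    (hu : u ∈ Subgroup.closure (cs.simple '' J)) (hne : u ≠ 1) :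
    ∃ i ∈ J, cs.IsRightDescent u i := by
  obtain ⟨ω, hω, hred, rfl⟩ := exists_isReduced_word_of_mem_closure cs hu
  rcases List.eq_nil_or_concat ω with rfl | ⟨ω₀, i, rfl⟩
  · exact absurd cs.wordProd_nil hne
  · refine ⟨i, hω i (by simp), ?_⟩
    have hlen : cs.length (cs.wordProd (ω₀.concat i)) = ω₀.length + 1 := by
      rw [hred, List.length_concat]
    have := cs.length_wordProd_le ω₀
    rw [IsRightDescent, wordProd_concat, simple_mul_simple_cancel_right, ← wordProd_concat, hlen]
    omega

def IsMinimalInCoset (J : Set B) (x : W) : Prop :=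
  ∀ v : W, x⁻¹ * v ∈ Subgroup.closure (cs.simple '' J) → cs.length x ≤ cs.length v

lemma exists_isMinimalInCoset (J : Set B) (w : W) :
    ∃ x : W, x⁻¹ * w ∈ Subgroup.closure (cs.simple '' J) ∧ IsMinimalInCoset cs J x := by
  classical
  have hex : ∃ k, ∃ x : W, x⁻¹ * w ∈ Subgroup.closure (cs.simple '' J) ∧ cs.length x = k :=
    ⟨_, w, by simp [one_mem], rfl⟩
  obtain ⟨x, hx, hlen⟩ := Nat.find_spec hex
  refine ⟨x, hx, fun v hv => hlen ▸ Nat.find_min' hex ⟨v, ?_, rfl⟩⟩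
  simpa [mul_assoc] using mul_mem (inv_mem hv) hx

variable {cs}

theorem IsMinimalInCoset.length_mul {x u : W} (hx : IsMinimalInCoset cs J x)
    (hu : u ∈ Subgroup.closure (cs.simple '' J)) :
    cs.length (x * u) = cs.length x + cs.length u := by
  obtain ⟨α, hα, rfl⟩ := cs.exists_isReduced x
  obtain ⟨β, hβJ, hβ, rfl⟩ := exists_isReduced_word_of_mem_closure cs hu
  suffices hred : cs.IsReduced (α ++ β) by
    rw [← wordProd_append, hred, hα, hβ, List.length_append]
  -- a deletion of two letters from `α ++ β` cannot touch `α`, as `x` is minimal in `x W_J`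
  by_contra hred
  obtain ⟨γ, hsub, hlen, hγ⟩ := exists_sublist_of_not_isReduced cs hred
  obtain ⟨γ₁, γ₂, rfl, hγ₁, hγ₂⟩ := List.sublist_append_iff.mp hsub
  rw [wordProd_append, wordProd_append] at hγ
  have hcoset : (cs.wordProd α)⁻¹ * cs.wordProd γ₁ ∈ Subgroup.closure (cs.simple '' J) := by
    rw [show cs.wordProd γ₁ = cs.wordProd α * cs.wordProd β * (cs.wordProd γ₂)⁻¹ by
      rw [← hγ, mul_inv_cancel_right]]
    simpa [mul_assoc] using mul_mem hu (inv_mem (wordProd_mem_closure cs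
      fun i hi => hβJ i (hγ₂.subset hi)))
  have hγ₁α : γ₁ = α := by
    refine hγ₁.eq_of_length (le_antisymm hγ₁.length_le ?_)
    have := cs.length_wordProd_le γ₁
    have := hx _ hcoset
    rw [hα] at this
    omega
  subst hγ₁α
  have := cs.length_wordProd_le γ₂
  rw [mul_left_cancel hγ, hβ] at this
  simp only [List.length_append] at hlen
  omega

theorem IsMinimalInCoset.length_lt_mul_simple {x : W} (hx : IsMinimalInCoset cs J x) {i : B}
    (hi : i ∈ J) : cs.length x < cs.length (x * cs.simple i) :=
  lt_of_le_of_ne (hx _ (by simpa using Subgroup.subset_closure (Set.mem_image_of_mem _ hi)))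
    (cs.length_mul_simple_ne x i).symm

theorem IsMinimalInCoset.eq_of_forall_length_lt {x₀ x : W} (hx₀ : IsMinimalInCoset cs J x₀)
    (hx : ∀ i ∈ J, cs.length x < cs.length (x * cs.simple i))
    (hcoset : x₀⁻¹ * x ∈ Subgroup.closure (cs.simple '' J)) : x = x₀ := by
  by_contra hne
  obtain ⟨i, hi, hdesc⟩ := exists_isRightDescent_of_mem_closure cs hcoset
    (fun h => hne (inv_mul_eq_one.mp h).symm)
  have h₁ := hx₀.length_mul hcoset
  have h₂ := hx₀.length_mul (mul_mem hcoset (Subgroup.subset_closure ⟨i, hi, rfl⟩))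
  rw [mul_inv_cancel_left] at h₁
  rw [← mul_assoc, mul_inv_cancel_left] at h₂
  have := hx i hi
  rw [IsRightDescent] at hdesc
  omega

end

lemma tauSet_univ : tauSet cs Set.univ = Rset cs := by
  ext x
  simp [tauSet, Rset]

lemma exists_list_tauSet_of_even {S : Set (Fin (n + 1))} :
    ∀ ω : List (Fin (n + 1)), (∀ i ∈ ω, i ∈ S) → Even ω.length →
      ∃ l : List W, (∀ r ∈ l, r ∈ tauSet cs S ∪ (tauSet cs S)⁻¹) ∧ l.prod = cs.wordProd ω ∧
        l.length = (ω.filter (· ≠ 0)).length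
  | [], _, _ => ⟨[], by simp, by simp, by simp⟩
  | [_], _, h => absurd h (by simp)
  | b :: c :: ω, hS, h => by
    obtain ⟨l, hl, hprod, hlen⟩ := exists_list_tauSet_of_even ω
      (fun i hi => hS i (by simp [hi])) (by simpa [Nat.even_add_one] using h)
    refine ⟨(if b = 0 then [] else [cs.simple b * cs.simple 0]) ++
      (if c = 0 then [] else [cs.simple 0 * cs.simple c]) ++ l, ?_, ?_, ?_⟩
    · have hb : b ∈ S := hS b (by simp)
      have hc : c ∈ S := hS c (by simp)
      intro r hr
      simp only [List.mem_append] at hr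
      rcases hr with (hr | hr) | hr
      · split_ifs at hr with hb0
        · simp at hr
        · right
          simp only [List.mem_singleton] at hr
          exact ⟨b, hb, hb0, by simp [hr]⟩
      · split_ifs at hr with hc0
        · simp at hr
        · left
          simp only [List.mem_singleton] at hr
          exact ⟨c, hc, hc0, hr⟩
      · exact hl r hr
    · rw [List.prod_append, List.prod_append, hprod, wordProd_cons, wordProd_cons]
      split_ifs <;> simp_all [mul_assoc]
    · split_ifs <;> simp_all

lemma nu_le {ω : List (Fin (n + 1))} {w : W} (h : cs.wordProd ω = w) :
    nu cs w ≤ (ω.filter (· ≠ 0)).length :=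
  Nat.sInf_le ⟨ω, h, rfl⟩

lemma exists_word_length_filter_eq_nu (w : W) :
    ∃ ω : List (Fin (n + 1)), cs.wordProd ω = w ∧ (ω.filter (· ≠ 0)).length = nu cs w := by
  obtain ⟨ω, rfl⟩ := cs.wordProd_surjective w
  exact Nat.sInf_mem (s := {k | ∃ ω' : List (Fin (n + 1)), cs.wordProd ω' = cs.wordProd ω ∧
    (ω'.filter (· ≠ 0)).length = k}) ⟨_, ω, rfl, rfl⟩

lemma nu_mul_le (x y : W) : nu cs (x * y) ≤ nu cs x + nu cs y := by
  obtain ⟨α, rfl, hα⟩ := exists_word_length_filter_eq_nu cs x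
  obtain ⟨β, rfl, hβ⟩ := exists_word_length_filter_eq_nu cs y
  calc nu cs (cs.wordProd α * cs.wordProd β)
      ≤ ((α ++ β).filter (· ≠ 0)).length := nu_le cs (cs.wordProd_append α β)
    _ = _ := by rw [List.filter_append, List.length_append, hα, hβ]

lemma nu_simple_zero : nu cs (cs.simple 0) = 0 :=
  Nat.eq_zero_of_le_zero (nu_le cs (ω := [0]) (cs.wordProd_singleton 0))

lemma nu_mul_simple_zero (w : W) : nu cs (w * cs.simple 0) = nu cs w := by
  have h := nu_mul_le cs (w * cs.simple 0) (cs.simple 0)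
  rw [simple_mul_simple_cancel_right, nu_simple_zero] at h
  have := nu_mul_le cs w (cs.simple 0)
  rw [nu_simple_zero] at this
  omega

lemma nu_simple_zero_mul (w : W) : nu cs (cs.simple 0 * w) = nu cs w := by
  have h := nu_mul_le cs (cs.simple 0) (cs.simple 0 * w)
  rw [simple_mul_simple_cancel_left, nu_simple_zero] at h
  have := nu_mul_le cs (cs.simple 0) w
  rw [nu_simple_zero] at this
  omega

lemma nu_le_one_of_mem_Rsym {r : W} (hr : r ∈ Rsym cs) : nu cs r ≤ 1 := by
  rw [Rsym, Set.mem_union, Set.mem_inv] at hr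
  rcases hr with ⟨i, hi, rfl⟩ | ⟨i, hi, hr⟩
  · exact nu_le cs (ω := [0, i]) (by simp [wordProd_cons]) |>.trans (by simp [hi])
  · rw [← inv_inv r, hr]
    exact nu_le cs (ω := [i, 0]) (by simp [wordProd_cons]) |>.trans (by simp [hi])

lemma nu_list_prod_le {l : List W} (hl : ∀ r ∈ l, r ∈ Rsym cs) : nu cs l.prod ≤ l.length := by
  induction l with
  | nil => simpa using nu_le cs (ω := []) cs.wordProd_nil
  | cons r l ih =>
    rw [List.prod_cons, List.length_cons]
    have := nu_le_one_of_mem_Rsym cs (hl r List.mem_cons_self)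
    have := ih fun x hx => hl x (List.mem_cons_of_mem r hx)
    have := nu_mul_le cs r l.prod
    omega

theorem glen_Rsym_eq_nu {w : W} (hw : w ∈ alt cs) : glen (Rsym cs) w = nu cs w := by
  obtain ⟨ω, rfl, hω⟩ := exists_word_length_filter_eq_nu cs w
  obtain ⟨l, hl, hprod, hlen⟩ := exists_list_tauSet_of_even cs (S := Set.univ) ω (by simp)
    ((even_length_wordProd_iff cs ω).mp hw)
  rw [tauSet_univ] at hl
  have hne : {k | ∃ l : List W, (∀ x ∈ l, x ∈ Rsym cs) ∧ l.prod = cs.wordProd ω ∧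
      l.length = k}.Nonempty := ⟨_, l, hl, hprod, rfl⟩
  obtain ⟨l', hl', hprod', hlen'⟩ := Nat.sInf_mem hne
  refine le_antisymm (Nat.sInf_le ⟨l, hl, hprod, hlen.trans hω⟩) ?_
  rw [glen, ← hlen', ← hprod']
  exact nu_list_prod_le cs hl'

/-- The number of letters `0` of a word, modulo two, as a character of `W`. -/
def simpleZeroParity (hEL : EvenlyLaced M) : W →* Multiplicative (ZMod 2) :=
  cs.lift ⟨fun i => if i = 0 then Multiplicative.ofAdd 1 else 1, by
    have hsq : Multiplicative.ofAdd (1 : ZMod 2) ^ 2 = 1 := rfl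
    intro i j
    rcases eq_or_ne i 0 with rfl | hi <;> rcases eq_or_ne j 0 with rfl | hj
    · simpa [sq] using hsq
    · obtain ⟨k, hk⟩ := hEL j hj
      simp [hj, hk, ← two_mul, pow_mul, hsq]
    · obtain ⟨k, hk⟩ := hEL i hi
      simp [hi, M.symmetric i 0, hk, ← two_mul, pow_mul, hsq]
    · simp [hi, hj]⟩

lemma simpleZeroParity_simple (hEL : EvenlyLaced M) (i : Fin (n + 1)) :
    simpleZeroParity cs hEL (cs.simple i) = if i = 0 then Multiplicative.ofAdd 1 else 1 :=
  cs.lift_apply_simple _ i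

lemma simple_mem_That_iff (hEL : EvenlyLaced M) (i : Fin (n + 1)) :
    cs.simple i ∈ That cs ↔ i ≠ 0 := by
  refine ⟨?_, fun hi => ⟨1, i, hi, by simp⟩⟩
  rintro ⟨g, j, hj, h⟩ rfl
  have := congrArg (simpleZeroParity cs hEL) h
  simp [simpleZeroParity_simple, hj] at this

lemma inv_mul_mul_mem_That_iff (g t : W) : g⁻¹ * t * g ∈ That cs ↔ t ∈ That cs := by
  constructor
  · rintro ⟨v, i, hi, h⟩
    refine ⟨g * v, i, hi, ?_⟩
    rw [show t = g * (g⁻¹ * t * g) * g⁻¹ by group, h]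
    group
  · rintro ⟨v, i, hi, rfl⟩
    exact ⟨g⁻¹ * v, i, hi, by group⟩

theorem nu_wordProd_of_isReduced (hEL : EvenlyLaced M) {ω : List (Fin (n + 1))}
    (hred : cs.IsReduced ω) : nu cs (cs.wordProd ω) = (ω.filter (· ≠ 0)).length := by
  classical
  have hfilter (ω' : List (Fin (n + 1))) :
      ω'.filter (fun i => cs.simple i ∈ That cs) = ω'.filter (· ≠ 0) :=
    List.filter_congr fun i _ => by simp [simple_mem_That_iff cs hEL]
  obtain ⟨ω', hω', hlen⟩ := exists_word_length_filter_eq_nu cs (cs.wordProd ω)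
  refine le_antisymm (nu_le cs rfl) ?_
  rw [← hlen, ← hfilter, ← hfilter]
  exact length_filter_le_of_isReduced cs _ (inv_mul_mul_mem_That_iff cs) hω'.symm hred

theorem nu_mul_of_length_add (hEL : EvenlyLaced M) {x y : W}
    (h : cs.length (x * y) = cs.length x + cs.length y) :
    nu cs (x * y) = nu cs x + nu cs y := by
  obtain ⟨α, hα, rfl⟩ := cs.exists_isReduced x
  obtain ⟨β, hβ, rfl⟩ := cs.exists_isReduced y
  have hred : cs.IsReduced (α ++ β) := by
    rw [CoxeterSystem.IsReduced, wordProd_append, h, hα, hβ, List.length_append]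
  rw [← wordProd_append, nu_wordProd_of_isReduced cs hEL hred, nu_wordProd_of_isReduced cs hEL hα,
    nu_wordProd_of_isReduced cs hEL hβ, List.filter_append, List.length_append]

lemma tau_eq_or (x : W) : tau cs x = x ∨ tau cs x = x * cs.simple 0 := by
  unfold tau
  split_ifs
  exacts [Or.inl rfl, Or.inr rfl]

lemma tau_mem_alt (x : W) : tau cs x ∈ alt cs := by
  change Even (cs.length (tau cs x))
  unfold tau
  split_ifs with h
  · exact h
  · have := cs.length_mul_simple_ne x 0
    rcases cs.length_mul_simple x 0 with h' | h' <;> grind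

lemma inv_mul_tau_mem_parabolic {J : Set (Fin (n + 1))} (h0 : (0 : Fin (n + 1)) ∈ J) (x : W) :
    x⁻¹ * tau cs x ∈ parabolic cs J := by
  rcases tau_eq_or cs x with h | h <;> rw [h]
  · simp [one_mem]
  · simpa [parabolic] using Subgroup.subset_closure (Set.mem_image_of_mem cs.simple h0)

lemma nu_tau (x : W) : nu cs (tau cs x) = nu cs x := by
  rcases tau_eq_or cs x with h | h <;> rw [h]
  exact nu_mul_simple_zero cs x

lemma nu_tau_inv_mul (x w : W) : nu cs ((tau cs x)⁻¹ * w) = nu cs (x⁻¹ * w) := by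
  rcases tau_eq_or cs x with h | h <;> rw [h]
  rw [mul_inv_rev, inv_simple, mul_assoc, nu_simple_zero_mul]

lemma closure_tauSet_le_parabolic {J : Set (Fin (n + 1))} (h0 : (0 : Fin (n + 1)) ∈ J) :
    Subgroup.closure (tauSet cs J) ≤ parabolic cs J := by
  rw [Subgroup.closure_le]
  rintro _ ⟨i, hi, -, rfl⟩
  exact mul_mem (Subgroup.subset_closure ⟨0, h0, rfl⟩) (Subgroup.subset_closure ⟨i, hi, rfl⟩)

lemma mem_closure_tauSet {J : Set (Fin (n + 1))} {y : W} (hy : y ∈ parabolic cs J)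
    (hy' : y ∈ alt cs) : y ∈ Subgroup.closure (tauSet cs J) := by
  obtain ⟨ω, hω, rfl⟩ := exists_word_of_mem_closure cs hy
  obtain ⟨l, hl, hprod, -⟩ :=
    exists_list_tauSet_of_even cs ω hω ((even_length_wordProd_iff cs ω).mp hy')
  rw [← hprod]
  refine Subgroup.list_prod_mem _ fun r hr => ?_
  rcases hl r hr with h | h
  · exact Subgroup.subset_closure h
  · simpa using inv_mem (Subgroup.subset_closure h)

lemma tau_inv_mul_mem_closure_tauSet {J : Set (Fin (n + 1))} (h0 : (0 : Fin (n + 1)) ∈ J)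
    {x w : W} (hxw : x⁻¹ * w ∈ parabolic cs J) (hw : w ∈ alt cs) :
    (tau cs x)⁻¹ * w ∈ Subgroup.closure (tauSet cs J) := by
  refine mem_closure_tauSet cs ?_ (mul_mem (inv_mem (tau_mem_alt cs x)) hw)
  simpa [mul_assoc] using mul_mem (inv_mem (inv_mul_tau_mem_parabolic cs h0 x)) hxw

lemma eq_of_eq_tau_mul {J : Set (Fin (n + 1))} (h0 : (0 : Fin (n + 1)) ∈ J) {x₀ x y w : W}
    (hx₀ : IsMinimalInCoset cs J x₀) (hx₀w : x₀⁻¹ * w ∈ parabolic cs J) (hx : x ∈ minReps cs J)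
    (hy : y ∈ Subgroup.closure (tauSet cs J)) (hxy : w = tau cs x * y) : x = x₀ := by
  have hxw : x⁻¹ * w ∈ parabolic cs J := by
    rw [hxy, ← mul_assoc]
    exact mul_mem (inv_mul_tau_mem_parabolic cs h0 x) (closure_tauSet_le_parabolic cs h0 hy)
  exact hx₀.eq_of_forall_length_lt hx
    (by simpa [parabolic, mul_assoc] using mul_mem hx₀w (inv_mem hxw))

theorem glen_eq_glen_tau_add_glen (hEL : EvenlyLaced M) {J : Set (Fin (n + 1))} {x w : W}
    (hx : IsMinimalInCoset cs J x) (hxw : x⁻¹ * w ∈ parabolic cs J) (hw : w ∈ alt cs) :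
    glen (Rsym cs) w = glen (Rsym cs) (tau cs x) + glen (Rsym cs) ((tau cs x)⁻¹ * w) := by
  rw [glen_Rsym_eq_nu cs hw, glen_Rsym_eq_nu cs (tau_mem_alt cs x),
    glen_Rsym_eq_nu cs (mul_mem (inv_mem (tau_mem_alt cs x)) hw), nu_tau, nu_tau_inv_mul]
  simpa using nu_mul_of_length_add cs hEL (hx.length_mul hxw)

/-- When `s₀` is evenly laced and `s₀ ∈ J ⊆ S`, every `w ∈ W⁺` factors uniquely
as `w = τ(x) y` with `x ∈ W^J`, `y ∈ W⁺_{τ(J)}`, and the factorization is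
length-additive. -/
theorem statement11 (hEL : EvenlyLaced M) (J : Set (Fin (n + 1)))
    (h0 : (0 : Fin (n + 1)) ∈ J) (w : W) (hw : w ∈ alt cs) :
    (∃! p : W × W, p.1 ∈ minReps cs J ∧ p.2 ∈ Subgroup.closure (tauSet cs J) ∧
      w = tau cs p.1 * p.2) ∧
    (∀ x y : W, x ∈ minReps cs J → y ∈ Subgroup.closure (tauSet cs J) →
      w = tau cs x * y →
      glen (Rsym cs) w = glen (Rsym cs) (tau cs x) + glen (Rsym cs) y) := by
  obtain ⟨x₀, hx₀w, hx₀⟩ := exists_isMinimalInCoset cs J w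
  have hfactor : ∀ x y : W, x ∈ minReps cs J → y ∈ Subgroup.closure (tauSet cs J) →
      w = tau cs x * y → x = x₀ ∧ y = (tau cs x₀)⁻¹ * w := by
    intro x y hx hy hxy
    obtain rfl := eq_of_eq_tau_mul cs h0 hx₀ hx₀w hx hy hxy
    exact ⟨rfl, by rw [hxy, inv_mul_cancel_left]⟩
  refine ⟨⟨(x₀, (tau cs x₀)⁻¹ * w), ⟨fun i hi => hx₀.length_lt_mul_simple hi,
      tau_inv_mul_mem_closure_tauSet cs h0 hx₀w hw, (mul_inv_cancel_left _ _).symm⟩,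
      fun p hp => Prod.ext_iff.mpr (hfactor p.1 p.2 hp.1 hp.2.1 hp.2.2)⟩,
    fun x y hx hy hxy => ?_⟩
  obtain ⟨rfl, rfl⟩ := hfactor x y hx hy hxy
  exact glen_eq_glen_tau_add_glen cs hEL hx₀ hx₀w hw

end AltCox
end
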